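/- arXiv:1605.01041 — 2 statements merged into one kernel-verified Lean document; each statement's English description precedes it below -/
import Mathlib

section
/- Suppose T_n → T and T_n* → T* in generalised strong resolvent sense, λ ∈ ρ(T) ∩ Δ_b((T_n)), and λ_n → λ. Then M := limsup ‖(T_n − λ_n)^{-1}‖ = limsup ‖(T_n − λ)^{-1}‖ ≥ ‖(T − λ)^{-1}‖, and if the inequality is strict then λ belongs to Λ_{ess,1/M}((T_n)) ∩ (Λ_{ess,1/M}((T_n*)))*. -/
open Filter Topology

noncomputable section

variable {H₀ : Type} [NormedAddCommGroup H₀] [InnerProductSpace ℂ H₀] [CompleteSpace H₀]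

/-- Weak convergence `x n ⇀ x₀` in the Hilbert space `H₀`. -/
def WeakTendsto (x : ℕ → H₀) (x₀ : H₀) : Prop :=
  ∀ y : H₀, Tendsto (fun n => (inner ℂ (x n - x₀) y : ℂ)) atTop (nhds 0)

/-- `P` is the orthogonal projection of `H₀` onto the subspace `Hsp`. -/
def IsOrthProj (Hsp : Submodule ℂ H₀) (P : H₀ →L[ℂ] H₀) : Prop :=
  ∀ x : H₀, P x ∈ Hsp ∧ x - P x ∈ Hspᗮ

/-- The operator `T` with domain `dom` is densely defined in the subspace `Hsp` and maps its
domain into `Hsp`. -/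
def ActsIn (Hsp dom : Submodule ℂ H₀) (T : H₀ →ₗ[ℂ] H₀) : Prop :=
  dom ≤ Hsp ∧ dom.topologicalClosure = Hsp ∧ ∀ x ∈ dom, T x ∈ Hsp

/-- The operator `T` with domain `dom` is closed. -/
def IsClosedOp (dom : Submodule ℂ H₀) (T : H₀ →ₗ[ℂ] H₀) : Prop :=
  ∀ (x : ℕ → H₀) (u v : H₀), (∀ k, x k ∈ dom) →
    Tendsto x atTop (nhds u) → Tendsto (fun k => T (x k)) atTop (nhds v) →
    u ∈ dom ∧ T u = v

/-- `R` is the resolvent `(T - lam)⁻¹` of the operator `T` acting in `Hsp` with domain `dom`,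
extended by `0` on the orthogonal complement of `Hsp`. -/
def InResolvent (Hsp dom : Submodule ℂ H₀) (T : H₀ →ₗ[ℂ] H₀) (lam : ℂ)
    (R : H₀ →L[ℂ] H₀) : Prop :=
  (∀ y ∈ Hsp, R y ∈ dom ∧ T (R y) - lam • R y = y) ∧
  (∀ x ∈ dom, R (T x - lam • x) = x) ∧
  ∀ y ∈ Hspᗮ, R y = 0

/-- `lam` belongs to the resolvent set `ρ(T)`. -/
def InResolventSet (Hsp dom : Submodule ℂ H₀) (T : H₀ →ₗ[ℂ] H₀) (lam : ℂ) : Prop :=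
  ∃ R : H₀ →L[ℂ] H₀, InResolvent Hsp dom T lam R

/-- `lam` belongs to the limiting essential spectrum of the sequence `(Tₙ)`. -/
def LimEssSpectrum (domn : ℕ → Submodule ℂ H₀) (Tn : ℕ → H₀ →ₗ[ℂ] H₀) (lam : ℂ) : Prop :=
  ∃ (φ : ℕ → ℕ) (x : ℕ → H₀), StrictMono φ ∧ (∀ k, x k ∈ domn (φ k)) ∧
    (∀ k, ‖x k‖ = 1) ∧ WeakTendsto x 0 ∧
    Tendsto (fun k => ‖Tn (φ k) (x k) - lam • x k‖) atTop (nhds 0)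

/-- `lam` belongs to the limiting essential `eps`-near spectrum of the sequence `(Tₙ)`. -/
def LimEssNear (domn : ℕ → Submodule ℂ H₀) (Tn : ℕ → H₀ →ₗ[ℂ] H₀) (eps : ℝ) (lam : ℂ) :
    Prop :=
  ∃ (φ : ℕ → ℕ) (x : ℕ → H₀), StrictMono φ ∧ (∀ k, x k ∈ domn (φ k)) ∧
    (∀ k, ‖x k‖ = 1) ∧ WeakTendsto x 0 ∧
    Tendsto (fun k => ‖Tn (φ k) (x k) - lam • x k‖) atTop (nhds eps)

/-- `lam` belongs to the limiting approximate point spectrum of the sequence `(Tₙ)`. -/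
def LimApproxSpectrum (domn : ℕ → Submodule ℂ H₀) (Tn : ℕ → H₀ →ₗ[ℂ] H₀) (lam : ℂ) : Prop :=
  ∃ (φ : ℕ → ℕ) (x : ℕ → H₀), StrictMono φ ∧ (∀ k, x k ∈ domn (φ k)) ∧
    (∀ k, ‖x k‖ = 1) ∧
    Tendsto (fun k => ‖Tn (φ k) (x k) - lam • x k‖) atTop (nhds 0)

/-- `lam` belongs to the essential spectrum of `T`. -/
def EssSpectrum (dom : Submodule ℂ H₀) (T : H₀ →ₗ[ℂ] H₀) (lam : ℂ) : Prop :=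
  ∃ x : ℕ → H₀, (∀ k, x k ∈ dom) ∧ (∀ k, ‖x k‖ = 1) ∧ WeakTendsto x 0 ∧
    Tendsto (fun k => ‖T (x k) - lam • x k‖) atTop (nhds 0)

/-- `lam` belongs to the essential `eps`-near spectrum of `T`. -/
def EssNear (dom : Submodule ℂ H₀) (T : H₀ →ₗ[ℂ] H₀) (eps : ℝ) (lam : ℂ) : Prop :=
  ∃ x : ℕ → H₀, (∀ k, x k ∈ dom) ∧ (∀ k, ‖x k‖ = 1) ∧ WeakTendsto x 0 ∧
    Tendsto (fun k => ‖T (x k) - lam • x k‖) atTop (nhds eps)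

/-- `lam` belongs to the approximate point spectrum of `T`. -/
def ApproxSpectrum (dom : Submodule ℂ H₀) (T : H₀ →ₗ[ℂ] H₀) (lam : ℂ) : Prop :=
  ∃ x : ℕ → H₀, (∀ k, x k ∈ dom) ∧ (∀ k, ‖x k‖ = 1) ∧
    Tendsto (fun k => ‖T (x k) - lam • x k‖) atTop (nhds 0)

/-- `lam` belongs to the point spectrum of `T`. -/
def PointSpectrum (dom : Submodule ℂ H₀) (T : H₀ →ₗ[ℂ] H₀) (lam : ℂ) : Prop :=
  ∃ x ∈ dom, x ≠ 0 ∧ T x = lam • x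

/-- `lam` belongs to the `eps`-approximate point spectrum of `T`. -/
def PseudoAppSpectrum (dom : Submodule ℂ H₀) (T : H₀ →ₗ[ℂ] H₀) (eps : ℝ) (lam : ℂ) : Prop :=
  ∃ x ∈ dom, ‖x‖ = 1 ∧ ‖T x - lam • x‖ < eps

/-- `lam` belongs to the spectrum of `T` acting in `Hsp`. -/
def InSpec (Hsp dom : Submodule ℂ H₀) (T : H₀ →ₗ[ℂ] H₀) (lam : ℂ) : Prop :=
  ¬ InResolventSet Hsp dom T lam

/-- `lam` belongs to the `eps`-pseudospectrum of `T` acting in `Hsp`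
(with the convention `‖(T-lam)⁻¹‖ = ∞` on the spectrum). -/
def InPseudoSpec (Hsp dom : Submodule ℂ H₀) (T : H₀ →ₗ[ℂ] H₀) (eps : ℝ) (lam : ℂ) : Prop :=
  (¬ InResolventSet Hsp dom T lam) ∨
    ∃ R : H₀ →L[ℂ] H₀, InResolvent Hsp dom T lam R ∧ 1 / eps < ‖R‖

/-- Generalised strong resolvent convergence `Tₙ → T`. -/
def GSRConv (Hsp dom : Submodule ℂ H₀) (T : H₀ →ₗ[ℂ] H₀)
    (Hn domn : ℕ → Submodule ℂ H₀) (Tn : ℕ → H₀ →ₗ[ℂ] H₀) : Prop :=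
  ∃ (n₀ : ℕ) (lam₀ : ℂ) (R : H₀ →L[ℂ] H₀) (Rn : ℕ → H₀ →L[ℂ] H₀),
    InResolvent Hsp dom T lam₀ R ∧
    (∀ n, n ≥ n₀ → InResolvent (Hn n) (domn n) (Tn n) lam₀ (Rn n)) ∧
    ∀ y : H₀, Tendsto (fun n => Rn n y) atTop (nhds (R y))

/-- Generalised norm resolvent convergence `Tₙ → T`. -/
def GNRConv (Hsp dom : Submodule ℂ H₀) (T : H₀ →ₗ[ℂ] H₀)
    (Hn domn : ℕ → Submodule ℂ H₀) (Tn : ℕ → H₀ →ₗ[ℂ] H₀) : Prop :=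
  ∃ (n₀ : ℕ) (lam₀ : ℂ) (R : H₀ →L[ℂ] H₀) (Rn : ℕ → H₀ →L[ℂ] H₀),
    InResolvent Hsp dom T lam₀ R ∧
    (∀ n, n ≥ n₀ → InResolvent (Hn n) (domn n) (Tn n) lam₀ (Rn n)) ∧
    Tendsto (fun n => ‖Rn n - R‖) atTop (nhds 0)

/-- The sequence of bounded operators `(Bₙ)`, `Bₙ ∈ L(Hₙ)`, is discretely compact: images of
bounded sequences `xₙ ∈ Hₙ` have subsequences converging in norm to an element of `Hsp`. -/
def DiscretelyCompact (Hsp : Submodule ℂ H₀) (Hn : ℕ → Submodule ℂ H₀)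
    (B : ℕ → H₀ →L[ℂ] H₀) : Prop :=
  ∀ (φ : ℕ → ℕ) (x : ℕ → H₀), StrictMono φ → (∀ k, x k ∈ Hn (φ k)) →
    (∃ C : ℝ, ∀ k, ‖x k‖ ≤ C) →
    ∃ (ψ : ℕ → ℕ) (z : H₀), StrictMono ψ ∧ z ∈ Hsp ∧
      Tendsto (fun k => B (φ (ψ k)) (x (ψ k))) atTop (nhds z)

/-- `S` with domain `domS` is the Hilbert-space adjoint of the densely defined operator `T`
acting in `Hsp` with domain `dom`. -/
def IsAdjointOp (Hsp dom : Submodule ℂ H₀) (T : H₀ →ₗ[ℂ] H₀)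
    (domS : Submodule ℂ H₀) (S : H₀ →ₗ[ℂ] H₀) : Prop :=
  domS ≤ Hsp ∧ ∀ y ∈ Hsp, ∀ z ∈ Hsp,
    ((y ∈ domS ∧ S y = z) ↔ ∀ x ∈ dom, (inner ℂ (T x) y : ℂ) = inner ℂ x z)

/-- The sequence of bounded operators `(Aₙ)` converges strongly. -/
def StrongConvSeq (A : ℕ → H₀ →L[ℂ] H₀) : Prop :=
  ∃ A₀ : H₀ →L[ℂ] H₀, ∀ y : H₀, Tendsto (fun n => A n y) atTop (nhds (A₀ y))

/-- `lam` belongs to the region of boundedness `Δ_b((Tₙ))`. -/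
def InRegionOfBoundedness (Hn domn : ℕ → Submodule ℂ H₀) (Tn : ℕ → H₀ →ₗ[ℂ] H₀)
    (lam : ℂ) : Prop :=
  ∃ (n₀ : ℕ) (C : ℝ) (Rn : ℕ → H₀ →L[ℂ] H₀),
    ∀ n, n ≥ n₀ → InResolvent (Hn n) (domn n) (Tn n) lam (Rn n) ∧ ‖Rn n‖ ≤ C


/-!
Strong resolvent convergence at one point `lam₀` propagates to every `lam ∈ ρ(T) ∩ Δ_b`: if
`(Tₙ - lam) xₙ ≈ Pₙ y` with `xₙ → x` then `Rₙ(lam) y → x` by the uniform bound, and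
`xₙ = Rₙ(lam₀) (T - lam₀) R(lam) y` is such a sequence. The same holds for the adjoints, whose
resolvents are `Rₙ(lam)†`. Lower semicontinuity of the norm under strong convergence gives
`‖R(lam)‖ ≤ M`, and since `Rₙ(lamₙ) = Rₙ(lam) (1 - (lamₙ - lam) Rₙ(lam))⁻¹` the two limsups agree.

If `‖R(lam)‖ < M`, take `nₖ` with `‖Rₙₖ(lam)‖ → M` and `uₖ ∈ Hₙₖ` in the unit ball nearly
attaining these norms. A weak limit `u₀` of `uₖ` must vanish, because the norm of `Rₙₖ(lam) uₖ`
splits asymptotically into the parts coming from `u₀` and from `uₖ - u₀`, and the part from `u₀`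
is at most `‖R(lam)‖ ‖u₀‖`. Strong convergence of the adjoints then makes `Rₙₖ(lam) uₖ` weakly
null, and its normalisation `xₖ` satisfies `‖(Tₙₖ - lam) xₖ‖ = ‖uₖ‖ / ‖Rₙₖ(lam) uₖ‖ → 1 / M`.
The claim for the adjoints is the same argument applied to `Rₙ(lam)†`.
-/

open scoped InnerProduct InnerProductSpace

theorem limsup_add_of_right_tendsto_zero {ι : Type*} {f : Filter ι} [f.NeBot] {u v : ι → ℝ}
    (hu : IsBoundedUnder (· ≤ ·) f u) (hu' : IsBoundedUnder (· ≥ ·) f u)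
    (hv : Tendsto v f (𝓝 0)) : limsup (u + v) f = limsup u f := by
  refine le_antisymm ?_ ?_
  · simpa [hv.limsup_eq] using limsup_add_le hu' hu hv.isBoundedUnder_ge.isCoboundedUnder_le
      hv.isBoundedUnder_le
  · simpa [hv.liminf_eq] using le_limsup_add hu hu'.isCoboundedUnder_le hv.isBoundedUnder_le
      hv.isBoundedUnder_ge

theorem ContinuousLinearMap.norm_le_limsup_norm_of_tendsto_apply {𝕜 E F ι : Type*}
    [NontriviallyNormedField 𝕜] [SeminormedAddCommGroup E] [NormedSpace 𝕜 E]
    [SeminormedAddCommGroup F] [NormedSpace 𝕜 F] {l : Filter ι} [l.NeBot]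
    {A : ι → E →L[𝕜] F} {A₀ : E →L[𝕜] F} (hA : ∀ y, Tendsto (fun n => A n y) l (𝓝 (A₀ y)))
    (hb : IsBoundedUnder (· ≤ ·) l fun n => ‖A n‖) : ‖A₀‖ ≤ limsup (fun n => ‖A n‖) l := by
  refine le_of_forall_gt_imp_ge_of_dense fun c hc => ?_
  have hev : ∀ᶠ n in l, ‖A n‖ < c := eventually_lt_of_limsup_lt hc hb
  have hc0 : 0 ≤ c := (norm_nonneg _).trans hev.exists.choose_spec.le
  refine A₀.opNorm_le_bound hc0 fun y => le_of_tendsto (hA y).norm ?_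
  filter_upwards [hev] with n hn
  exact (A n).le_of_opNorm_le hn.le y

theorem tendsto_norm_one_of_tendsto_norm_apply {𝕜 E F : Type*}
    [NontriviallyNormedField 𝕜] [SeminormedAddCommGroup E] [NormedSpace 𝕜 E]
    [SeminormedAddCommGroup F] [NormedSpace 𝕜 F] {A : ℕ → E →L[𝕜] F} {u : ℕ → E} {M : ℝ}
    (hM : 0 < M) (hA : Tendsto (fun k => ‖A k‖) atTop (𝓝 M)) (hu : ∀ k, ‖u k‖ ≤ 1)
    (hAu : Tendsto (fun k => ‖A k (u k)‖) atTop (𝓝 M)) :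
    Tendsto (fun k => ‖u k‖) atTop (𝓝 1) := by
  refine tendsto_of_tendsto_of_tendsto_of_le_of_le' (div_self hM.ne' ▸ hAu.div hA hM.ne')
    tendsto_const_nhds ?_ (.of_forall hu)
  filter_upwards [hA.eventually_const_lt hM] with k hk
  change ‖A k (u k)‖ / ‖A k‖ ≤ ‖u k‖
  rw [div_le_iff₀ hk, mul_comm]
  exact (A k).le_opNorm (u k)

section

variable {E : Type} [NormedAddCommGroup E] [InnerProductSpace ℂ E]

namespace IsOrthProj

variable {K : Submodule ℂ E} {P : E →L[ℂ] E}

theorem apply_eq_self (hP : IsOrthProj K P) {x : E} (hx : x ∈ K) : P x = x := by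
  have h : P x - x ∈ K ⊓ Kᗮ := ⟨sub_mem (hP x).1 hx, by simpa using neg_mem (hP x).2⟩
  rwa [Submodule.inf_orthogonal_eq_bot, Submodule.mem_bot, sub_eq_zero] at h

theorem map_apply_eq (hP : IsOrthProj K P) {A : E →L[ℂ] E} (hA : ∀ y ∈ Kᗮ, A y = 0) (y : E) :
    A (P y) = A y := by
  rw [← add_zero (A (P y)), ← hA _ (hP y).2, ← map_add, add_sub_cancel]

theorem norm_apply_le (hP : IsOrthProj K P) (x : E) : ‖P x‖ ≤ ‖x‖ := by
  have h := norm_add_sq_eq_norm_sq_add_norm_sq_of_inner_eq_zero (P x) (x - P x)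
    (Submodule.inner_right_of_mem_orthogonal (hP x).1 (hP x).2)
  rw [add_sub_cancel] at h
  nlinarith [norm_nonneg (P x), norm_nonneg x, sq_nonneg ‖x - P x‖]

theorem inner_apply_left (hP : IsOrthProj K P) {y : E} (hy : y ∈ K) (v : E) :
    ⟪P v, y⟫_ℂ = ⟪v, y⟫_ℂ := by
  have h := Submodule.inner_left_of_mem_orthogonal hy (hP v).2
  rwa [inner_sub_left, sub_eq_zero, eq_comm] at h

/-- A subspace admitting an orthogonal projection is closed. -/
theorem orthogonal_orthogonal_le (hP : IsOrthProj K P) : Kᗮᗮ ≤ K := by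
  intro x hx
  have hPx : ⟪x - P x, P x⟫_ℂ = 0 :=
    Submodule.inner_left_of_mem_orthogonal (hP x).1 (hP x).2
  have hx' : ⟪x - P x, x⟫_ℂ = 0 :=
    Submodule.inner_right_of_mem_orthogonal (K := Kᗮ) (hP x).2 hx
  have h : x = P x := by
    rw [← sub_eq_zero, ← inner_self_eq_zero (𝕜 := ℂ), inner_sub_right, hx', hPx, sub_zero]
  rw [h]
  exact (hP x).1

end IsOrthProj

namespace InResolvent

variable {K dom : Submodule ℂ E} {T : E →ₗ[ℂ] E} {lam : ℂ} {R P : E →L[ℂ] E}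

theorem apply_proj (hR : InResolvent K dom T lam R) (hP : IsOrthProj K P) (y : E) :
    R (P y) = R y :=
  hP.map_apply_eq hR.2.2 y

theorem apply_mem (hR : InResolvent K dom T lam R) (hP : IsOrthProj K P) (y : E) :
    R y ∈ dom := by
  rw [← hR.apply_proj hP]
  exact (hR.1 _ (hP y).1).1

theorem sub_smul_apply (hR : InResolvent K dom T lam R) (hP : IsOrthProj K P) (y : E) :
    T (R y) - lam • R y = P y := by
  rw [← hR.apply_proj hP]
  exact (hR.1 _ (hP y).1).2

theorem sub_smul_mem (hR : InResolvent K dom T lam R) (hP : IsOrthProj K P) {x : E}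
    (hx : x ∈ dom) : T x - lam • x ∈ K := by
  rw [← hR.2.1 x hx, hR.sub_smul_apply hP]
  exact (hP _).1

theorem map_mem (hR : InResolvent K dom T lam R) (hP : IsOrthProj K P) (hdom : dom ≤ K)
    {x : E} (hx : x ∈ dom) : T x ∈ K := by
  simpa using add_mem (hR.sub_smul_mem hP hx) (K.smul_mem lam (hdom hx))

/-- The second resolvent identity, solved for `R(μ) = R(lam) (1 - (μ - lam) R(lam))⁻¹`. -/
theorem shift (hR : InResolvent K dom T lam R) (hP : IsOrthProj K P) (hdom : dom ≤ K) {μ : ℂ}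
    (hunit : IsUnit (1 - (μ - lam) • R)) :
    InResolvent K dom T μ (R * Ring.inverse (1 - (μ - lam) • R)) := by
  set u := Ring.inverse (1 - (μ - lam) • R)
  have hu : u = 1 + (μ - lam) • (R * u) := by
    have h := Ring.mul_inverse_cancel _ hunit
    rw [sub_mul, one_mul, smul_mul_assoc] at h
    exact eq_add_of_sub_eq h
  have hcomm : Commute R u := by
    obtain ⟨U, hU⟩ := hunit
    have hu' : u = ↑U⁻¹ := by simp only [u, ← hU, Ring.inverse_unit]
    rw [hu']
    refine Commute.units_inv_right ?_
    rw [hU]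
    exact (Commute.one_right R).sub_right ((Commute.refl R).smul_right _)
  refine ⟨fun y hy => ?_, fun x hx => ?_, fun y hy => ?_⟩
  · have huy : u y = y + (μ - lam) • R (u y) := by
      conv_lhs => rw [hu]
      rfl
    have hmem : u y ∈ K := by
      rw [huy]
      exact add_mem hy (K.smul_mem _ (hdom (hR.apply_mem hP _)))
    obtain ⟨hdom', heq⟩ := hR.1 _ hmem
    refine ⟨hdom', ?_⟩
    change T (R (u y)) - μ • R (u y) = y
    calc T (R (u y)) - μ • R (u y) = (T (R (u y)) - lam • R (u y)) - (μ - lam) • R (u y) := by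
          module
      _ = y := by rw [heq]; exact sub_eq_iff_eq_add.mpr huy
  · have hRx : R (T x - μ • x) = (1 - (μ - lam) • R) x := by
      rw [show T x - μ • x = (T x - lam • x) - (μ - lam) • x by module, map_sub, map_smul,
        hR.2.1 x hx]
      rfl
    change (R * u) (T x - μ • x) = x
    rw [hcomm.eq]
    change u (R (T x - μ • x)) = x
    rw [hRx, ← mul_apply_eq_comp, Ring.inverse_mul_cancel _ hunit]
    rfl
  · rw [hcomm.eq]
    change u (R y) = 0
    rw [hR.2.2 y hy, map_zero]

open ContinuousLinearMap in
theorem adjoint [CompleteSpace E] (hR : InResolvent K dom T lam R) (hP : IsOrthProj K P)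
    (hdom : dom ≤ K) {domS : Submodule ℂ E} {S : E →ₗ[ℂ] E} (hadj : IsAdjointOp K dom T domS S)
    (hS : ∀ y ∈ domS, S y ∈ K) :
    InResolvent K domS S (starRingEnd ℂ lam) (R†) := by
  have hker : ∀ v ∈ Kᗮ, (R†) v = 0 := fun v hv => ext_inner_right ℂ fun z => by
    rw [adjoint_inner_left, Submodule.inner_left_of_mem_orthogonal (hdom (hR.apply_mem hP z)) hv,
      inner_zero_left]
  have hmem : ∀ y, (R†) y ∈ K := fun y => hP.orthogonal_orthogonal_le fun v hv => by
    rw [adjoint_inner_right, hR.2.2 v hv, inner_zero_left]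
  refine ⟨fun y hy => ?_, fun y hy => ?_, hker⟩
  · have hpair : ∀ x ∈ dom, ⟪T x, (R†) y⟫_ℂ = ⟪x, y + starRingEnd ℂ lam • (R†) y⟫_ℂ :=
        fun x hx => by
      have hRT : R (T x) = x + lam • R x := by
        have h := hR.2.1 x hx
        rwa [map_sub, map_smul, sub_eq_iff_eq_add] at h
      rw [adjoint_inner_right, hRT, inner_add_left, inner_smul_left, inner_add_right,
        inner_smul_right, adjoint_inner_right]
    obtain ⟨hdomS, hSy⟩ := (hadj.2 _ (hmem y) _ (add_mem hy (K.smul_mem _ (hmem y)))).mpr hpair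
    exact ⟨hdomS, by rw [hSy, add_sub_cancel_right]⟩
  · have hyK : y ∈ K := hadj.1 hy
    have hpair : ∀ x ∈ dom, ⟪T x, y⟫_ℂ = ⟪x, S y⟫_ℂ :=
      (hadj.2 y hyK (S y) (hS y hy)).mp ⟨hy, rfl⟩
    refine ext_inner_right ℂ fun v => ?_
    have h : ⟪R v, S y - starRingEnd ℂ lam • y⟫_ℂ = ⟪v, y⟫_ℂ := by
      rw [inner_sub_right, inner_smul_right, ← hpair _ (hR.apply_mem hP v), ← inner_smul_left,
        ← inner_sub_left, hR.sub_smul_apply hP, hP.inner_apply_left hyK]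
    rw [adjoint_inner_left, ← inner_conj_symm, h, inner_conj_symm]

end InResolvent

theorem exists_strictMono_weakTendsto [CompleteSpace E] [TopologicalSpace.SeparableSpace E]
    {u : ℕ → E} {c : ℝ} (hu : ∀ k, ‖u k‖ ≤ c) :
    ∃ ψ : ℕ → ℕ, ∃ v : E, StrictMono ψ ∧ WeakTendsto (u ∘ ψ) v := by
  have hmem : ∀ k, StrongDual.toWeakDual (InnerProductSpace.toDual ℂ E (u k)) ∈
      WeakDual.toStrongDual ⁻¹' Metric.closedBall (0 : StrongDual ℂ E) c := fun k => by
    simpa using hu k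
  obtain ⟨f, -, ψ, hψ, hlim⟩ := WeakDual.isSeqCompact_closedBall ℂ E 0 c hmem
  refine ⟨ψ, (InnerProductSpace.toDual ℂ E).symm (WeakDual.toStrongDual f), hψ, fun y => ?_⟩
  have h := (WeakDual.eval_continuous y).continuousAt.tendsto.comp hlim
  refine (sub_self (f y) ▸ h.sub_const (f y)).congr fun k => ?_
  rw [inner_sub_left, InnerProductSpace.toDual_symm_apply]
  rfl

theorem tendsto_norm_add_sq_sub {a b : ℕ → E} (h : Tendsto (fun k => ⟪a k, b k⟫_ℂ) atTop (𝓝 0)) :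
    Tendsto (fun k => ‖a k + b k‖ ^ 2 - (‖a k‖ ^ 2 + ‖b k‖ ^ 2)) atTop (𝓝 0) := by
  have h' := (Complex.continuous_re.tendsto 0).comp h |>.const_mul 2
  simp only [Complex.zero_re, mul_zero] at h'
  refine h'.congr fun k => ?_
  rw [norm_add_sq (𝕜 := ℂ)]
  simp

namespace WeakTendsto

variable {u : ℕ → E} {u₀ : E}

theorem tendsto_inner (hu : WeakTendsto u u₀) {c : ℝ} (hc : ∀ᶠ k in atTop, ‖u k‖ ≤ c)
    {z : ℕ → E} {z₀ : E} (hz : Tendsto z atTop (𝓝 z₀)) :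
    Tendsto (fun k => ⟪u k, z k⟫_ℂ) atTop (𝓝 ⟪u₀, z₀⟫_ℂ) := by
  have hsmall : Tendsto (fun k => ⟪u k, z k - z₀⟫_ℂ) atTop (𝓝 0) := by
    refine squeeze_zero_norm' ?_ (by simpa using (hz.sub_const z₀).norm.const_mul c)
    filter_upwards [hc] with k hk
    exact (norm_inner_le_norm _ _).trans (mul_le_mul_of_nonneg_right hk (norm_nonneg _))
  have h := ((hu z₀).add_const ⟪u₀, z₀⟫_ℂ).add hsmall
  simp only [zero_add, add_zero] at h
  refine h.congr fun k => ?_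
  rw [inner_sub_left, inner_sub_right]
  ring

theorem apply [CompleteSpace E] (hu : WeakTendsto u u₀) {c : ℝ} (hc : ∀ k, ‖u k‖ ≤ c)
    {A : ℕ → E →L[ℂ] E} {A₀ : E →L[ℂ] E}
    (hA : ∀ z, Tendsto (fun k => ((A k)†) z) atTop (𝓝 ((A₀†) z))) :
    WeakTendsto (fun k => A k (u k)) (A₀ u₀) := fun z => by
  have h := (hu.tendsto_inner (.of_forall hc) (hA z)).sub_const ⟪u₀, (A₀†) z⟫_ℂ
  rw [sub_self] at h
  refine h.congr fun k => ?_
  rw [inner_sub_left, ContinuousLinearMap.adjoint_inner_right,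
    ContinuousLinearMap.adjoint_inner_right]

theorem smul (hu : WeakTendsto u 0) {c : ℕ → ℂ} {c₀ : ℂ} (hc : Tendsto c atTop (𝓝 c₀)) :
    WeakTendsto (fun k => c k • u k) 0 := fun y => by
  have h := ((Complex.continuous_conj.tendsto c₀).comp hc).mul (hu y)
  rw [mul_zero] at h
  refine h.congr fun k => ?_
  simp [mul_comm]

/-- `‖Aₖ (uₖ - u₀)‖² → M² - ‖A₀ u₀‖²` and `‖uₖ - u₀‖² → 1 - ‖u₀‖²` give `M ‖u₀‖ ≤ ‖A₀ u₀‖`,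
which is impossible for `u₀ ≠ 0` since `‖A₀‖ < M`. -/
theorem eq_zero_of_tendsto_norm_apply [CompleteSpace E] (hu₀ : WeakTendsto u u₀)
    {A : ℕ → E →L[ℂ] E} {A₀ : E →L[ℂ] E} {M : ℝ}
    (hA : ∀ y, Tendsto (fun k => A k y) atTop (𝓝 (A₀ y)))
    (hA' : ∀ z, Tendsto (fun k => ((A k)†) z) atTop (𝓝 ((A₀†) z)))
    (hlt : ‖A₀‖ < M) (hnorm : Tendsto (fun k => ‖A k‖) atTop (𝓝 M)) (hu : ∀ k, ‖u k‖ ≤ 1)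
    (hAu : Tendsto (fun k => ‖A k (u k)‖) atTop (𝓝 M)) : u₀ = 0 := by
  have hM : 0 < M := (norm_nonneg _).trans_lt hlt
  have hw : WeakTendsto (fun k => u k - u₀) 0 := by simpa [WeakTendsto] using hu₀
  have hwb : ∀ k, ‖u k - u₀‖ ≤ 1 + ‖u₀‖ := fun k => (norm_sub_le _ _).trans (by linarith [hu k])
  have hw_sq : Tendsto (fun k => ‖u k - u₀‖ ^ 2) atTop (𝓝 (1 - ‖u₀‖ ^ 2)) := by
    have h := (((tendsto_norm_one_of_tendsto_norm_apply hM hnorm hu hAu).pow 2).sub_const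
      (‖u₀‖ ^ 2)).sub (tendsto_norm_add_sq_sub (a := fun k => u k - u₀) (b := fun _ => u₀)
      (by simpa only [sub_zero] using hw u₀))
    simp only [one_pow, sub_zero, sub_add_cancel] at h
    refine h.congr fun k => ?_
    ring
  have hAw_sq : Tendsto (fun k => ‖A k (u k - u₀)‖ ^ 2) atTop (𝓝 (M ^ 2 - ‖A₀ u₀‖ ^ 2)) := by
    have hcross : Tendsto (fun k => ⟪A k (u k - u₀), A k u₀⟫_ℂ) atTop (𝓝 0) := by
      have hb : ∀ᶠ k in atTop, ‖A k (u k - u₀)‖ ≤ (M + 1) * (1 + ‖u₀‖) := by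
        filter_upwards [hnorm.eventually_lt_const (lt_add_one M)] with k hk
        exact (A k).le_of_opNorm_le_of_le hk.le (hwb k)
      have h := (hw.apply hwb hA').tendsto_inner hb (hA u₀)
      rwa [map_zero, inner_zero_left] at h
    have h := ((hAu.pow 2).sub ((hA u₀).norm.pow 2)).sub (tendsto_norm_add_sq_sub hcross)
    simp only [sub_zero] at h
    refine h.congr fun k => ?_
    rw [← map_add, sub_add_cancel]
    ring
  have hle : M ^ 2 - ‖A₀ u₀‖ ^ 2 ≤ M ^ 2 * (1 - ‖u₀‖ ^ 2) := by
    refine le_of_tendsto_of_tendsto' hAw_sq ((hnorm.pow 2).mul hw_sq) fun k => ?_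
    rw [← mul_pow]
    exact pow_le_pow_left₀ (norm_nonneg _) ((A k).le_opNorm _) 2
  by_contra hu₀_ne
  have hu₀_pos : 0 < ‖u₀‖ := norm_pos_iff.mpr hu₀_ne
  have h1 : ‖A₀ u₀‖ ^ 2 ≤ (‖A₀‖ * ‖u₀‖) ^ 2 := pow_le_pow_left₀ (norm_nonneg _) (A₀.le_opNorm u₀) 2
  have h2 : ‖A₀‖ ^ 2 < M ^ 2 := pow_lt_pow_left₀ hlt (norm_nonneg _) two_ne_zero
  nlinarith [mul_lt_mul_of_pos_right h2 (pow_pos hu₀_pos 2)]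

end WeakTendsto

theorem exists_mem_tendsto_norm_apply {A : ℕ → E →L[ℂ] E} {M : ℝ}
    (hA : Tendsto (fun k => ‖A k‖) atTop (𝓝 M)) {K : ℕ → Submodule ℂ E} {P : ℕ → E →L[ℂ] E}
    (hP : ∀ k, IsOrthProj (K k) (P k)) (hker : ∀ᶠ k in atTop, ∀ y ∈ (K k)ᗮ, A k y = 0) :
    ∃ u : ℕ → E, (∀ k, u k ∈ K k) ∧ (∀ k, ‖u k‖ ≤ 1) ∧
      Tendsto (fun k => ‖A k (u k)‖) atTop (𝓝 M) := by
  have hex : ∀ k : ℕ, ∃ y : E, ‖y‖ < 1 ∧ ‖A k‖ - 1 / (k + 1) < ‖A k y‖ := fun k =>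
    (A k).exists_lt_apply_of_lt_opNorm (by linarith [Nat.one_div_pos_of_nat (α := ℝ) (n := k)])
  choose y hy1 hy using hex
  have hu1 : ∀ k, ‖P k (y k)‖ ≤ 1 := fun k => ((hP k).norm_apply_le _).trans (hy1 k).le
  refine ⟨fun k => P k (y k), fun k => (hP k (y k)).1, hu1, ?_⟩
  refine tendsto_of_tendsto_of_tendsto_of_le_of_le'
    (g := fun k : ℕ => ‖A k‖ - 1 / ((k : ℝ) + 1)) ?_ hA ?_ (.of_forall fun k => ?_)
  · simpa using hA.sub tendsto_one_div_add_atTop_nhds_zero_nat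
  · filter_upwards [hker] with k hk
    rw [(hP k).map_apply_eq hk]
    exact (hy k).le
  · simpa using (A k).le_of_opNorm_le_of_le le_rfl (hu1 k)

section ResolventSequences

variable {Hn domn : ℕ → Submodule ℂ E} {Tn : ℕ → E →ₗ[ℂ] E} {Pn Rn : ℕ → E →L[ℂ] E} {lam : ℂ}
  {C : ℝ}

theorem tendsto_resolvent_apply_of_approx (hPn : ∀ n, IsOrthProj (Hn n) (Pn n))
    (hRn : ∀ᶠ n in atTop, InResolvent (Hn n) (domn n) (Tn n) lam (Rn n) ∧ ‖Rn n‖ ≤ C)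
    {xn : ℕ → E} {x y : E} (hmem : ∀ᶠ n in atTop, xn n ∈ domn n) (hxn : Tendsto xn atTop (𝓝 x))
    (happrox : Tendsto (fun n => Pn n y - (Tn n (xn n) - lam • xn n)) atTop (𝓝 0)) :
    Tendsto (fun n => Rn n y) atTop (𝓝 x) := by
  have hsmall : Tendsto (fun n => Rn n (Pn n y - (Tn n (xn n) - lam • xn n))) atTop (𝓝 0) := by
    refine squeeze_zero_norm' ?_ (by simpa using happrox.norm.const_mul C)
    filter_upwards [hRn] with n hn
    exact (Rn n).le_of_opNorm_le hn.2 _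
  refine (zero_add x ▸ hsmall.add hxn).congr' ?_
  filter_upwards [hRn, hmem] with n hn hx
  rw [map_sub, hn.1.apply_proj (hPn n), hn.1.2.1 _ hx, sub_add_cancel]

theorem GSRConv.tendsto_resolvent_apply {K dom : Submodule ℂ E} {T : E →ₗ[ℂ] E}
    {P R : E →L[ℂ] E} (hP : IsOrthProj K P) (hPn : ∀ n, IsOrthProj (Hn n) (Pn n))
    (hPconv : ∀ y, Tendsto (fun n => Pn n y) atTop (𝓝 (P y)))
    (hconv : GSRConv K dom T Hn domn Tn) (hR : InResolvent K dom T lam R)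
    (hRn : ∀ᶠ n in atTop, InResolvent (Hn n) (domn n) (Tn n) lam (Rn n) ∧ ‖Rn n‖ ≤ C) (y : E) :
    Tendsto (fun n => Rn n y) atTop (𝓝 (R y)) := by
  obtain ⟨m, lam₀, R₀, Rn₀, hR₀, hRn₀, hlim⟩ := hconv
  have hRn₀' : ∀ᶠ n in atTop, InResolvent (Hn n) (domn n) (Tn n) lam₀ (Rn₀ n) :=
    eventually_atTop.2 ⟨m, hRn₀⟩
  have hx : R y ∈ dom := hR.apply_mem hP y
  set w := T (R y) - lam₀ • R y
  have hw : R₀ w = R y := hR₀.2.1 _ hx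
  refine tendsto_resolvent_apply_of_approx hPn hRn (xn := fun n => Rn₀ n w)
    (hRn₀'.mono fun n hn => hn.apply_mem (hPn n) w) (hw ▸ hlim w) ?_
  have hlimit : P y - P w - (lam₀ - lam) • R y = 0 := by
    rw [hP.apply_eq_self (hR₀.sub_smul_mem hP hx), ← hR.sub_smul_apply hP y]
    module
  have happrox := ((hPconv y).sub (hPconv w)).sub (hw ▸ (hlim w).const_smul (lam₀ - lam))
  refine (hlimit ▸ happrox).congr' ?_
  filter_upwards [hRn₀'] with n hn
  linear_combination (norm := module) hn.sub_smul_apply (hPn n) w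

theorem GSRConv.map_mem {K dom : Submodule ℂ E} {T : E →ₗ[ℂ] E} {P : E →L[ℂ] E}
    (hconv : GSRConv K dom T Hn domn Tn) (hP : IsOrthProj K P) (hdom : dom ≤ K) {x : E}
    (hx : x ∈ dom) : T x ∈ K :=
  let ⟨_, _, _, _, hR, _⟩ := hconv
  hR.map_mem hP hdom hx

theorem GSRConv.eventually_map_mem {K dom : Submodule ℂ E} {T : E →ₗ[ℂ] E}
    (hconv : GSRConv K dom T Hn domn Tn) (hPn : ∀ n, IsOrthProj (Hn n) (Pn n))
    (hdomn : ∀ n, domn n ≤ Hn n) : ∀ᶠ n in atTop, ∀ x ∈ domn n, Tn n x ∈ Hn n :=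
  let ⟨m, _, _, _, _, hRn, _⟩ := hconv
  eventually_atTop.2 ⟨m, fun n hn _ hx => (hRn n hn).map_mem (hPn n) (hdomn n) hx⟩

theorem exists_resolvent_limsup_norm_eq [CompleteSpace E] (hPn : ∀ n, IsOrthProj (Hn n) (Pn n))
    (hdom : ∀ n, domn n ≤ Hn n)
    (hRn : ∀ᶠ n in atTop, InResolvent (Hn n) (domn n) (Tn n) lam (Rn n) ∧ ‖Rn n‖ ≤ C)
    {lamn : ℕ → ℂ} (hlamn : Tendsto lamn atTop (𝓝 lam)) :
    ∃ R' : ℕ → E →L[ℂ] E,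
      (∀ᶠ n in atTop, InResolvent (Hn n) (domn n) (Tn n) (lamn n) (R' n)) ∧
      limsup (fun n => ‖R' n‖) atTop = limsup (fun n => ‖Rn n‖) atTop := by
  set t : ℕ → E →L[ℂ] E := fun n => (lamn n - lam) • Rn n
  have ht : Tendsto t atTop (𝓝 0) := by
    refine squeeze_zero_norm' ?_ (by simpa using (hlamn.sub_const lam).norm.mul_const C)
    filter_upwards [hRn] with n hn
    rw [norm_smul]
    exact mul_le_mul_of_nonneg_left hn.2 (norm_nonneg _)
  have hinv : Tendsto (fun n => Ring.inverse (1 - t n)) atTop (𝓝 1) := by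
    have h1 : Tendsto (fun n => 1 - t n) atTop (𝓝 ((1 : (E →L[ℂ] E)ˣ) : E →L[ℂ] E)) := by
      simpa using tendsto_const_nhds.sub ht
    have h2 := (NormedRing.inverse_continuousAt 1).tendsto.comp h1
    rwa [Units.val_one, Ring.inverse_one] at h2
  refine ⟨fun n => Rn n * Ring.inverse (1 - t n), ?_, ?_⟩
  · filter_upwards [hRn, ht.norm.eventually_lt_const (by simpa using one_pos)] with n hn htn
    exact hn.1.shift (hPn n) (hdom n) (isUnit_one_sub_of_norm_lt_one (by simpa using htn))
  have hdiff : Tendsto (fun n => ‖Rn n * Ring.inverse (1 - t n)‖ - ‖Rn n‖) atTop (𝓝 0) := by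
    refine squeeze_zero_norm' ?_ (by simpa using (hinv.sub_const 1).norm.const_mul C)
    filter_upwards [hRn] with n hn
    calc ‖‖Rn n * Ring.inverse (1 - t n)‖ - ‖Rn n‖‖
        ≤ ‖Rn n * Ring.inverse (1 - t n) - Rn n‖ := abs_norm_sub_norm_le _ _
      _ = ‖Rn n * (Ring.inverse (1 - t n) - 1)‖ := by rw [mul_sub, mul_one]
      _ ≤ C * ‖Ring.inverse (1 - t n) - 1‖ :=
        (norm_mul_le _ _).trans (mul_le_mul_of_nonneg_right hn.2 (norm_nonneg _))
  calc limsup (fun n => ‖Rn n * Ring.inverse (1 - t n)‖) atTop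
      = limsup ((fun n => ‖Rn n‖) + fun n => ‖Rn n * Ring.inverse (1 - t n)‖ - ‖Rn n‖) atTop := by
        simp only [Pi.add_def, add_sub_cancel]
    _ = limsup (fun n => ‖Rn n‖) atTop :=
        limsup_add_of_right_tendsto_zero (isBoundedUnder_of_eventually_le (hRn.mono fun _ h => h.2))
          (isBoundedUnder_of_eventually_ge (.of_forall fun _ => norm_nonneg _)) hdiff

theorem limEssNear_of_eventually {φ : ℕ → ℕ} (hφ : Tendsto φ atTop atTop) {x : ℕ → E} {eps : ℝ}
    (hx : ∀ᶠ k in atTop, x k ∈ domn (φ k) ∧ ‖x k‖ = 1) (hweak : WeakTendsto x 0)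
    (hlim : Tendsto (fun k => ‖Tn (φ k) (x k) - lam • x k‖) atTop (𝓝 eps)) :
    LimEssNear domn Tn eps lam := by
  obtain ⟨N, hN⟩ := eventually_atTop.1 hx
  obtain ⟨ψ, hψ, hmono⟩ :=
    strictMono_subseq_of_tendsto_atTop (hφ.comp (tendsto_add_atTop_nat N))
  have hσ : Tendsto (fun k => ψ k + N) atTop atTop :=
    (tendsto_add_atTop_nat N).comp hψ.tendsto_atTop
  exact ⟨_, fun k => x (ψ k + N), hmono, fun k => (hN _ (Nat.le_add_left N _)).1,
    fun k => (hN _ (Nat.le_add_left N _)).2, fun y => (hweak y).comp hσ, hlim.comp hσ⟩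

theorem limEssNear_of_resolvent_apply {φ : ℕ → ℕ} (hφ : Tendsto φ atTop atTop)
    {A : ℕ → E →L[ℂ] E}
    (hA : ∀ᶠ k in atTop, InResolvent (Hn (φ k)) (domn (φ k)) (Tn (φ k)) lam (A k))
    {u : ℕ → E} (hu : ∀ k, u k ∈ Hn (φ k)) {M : ℝ} (hM : 0 < M)
    (hu1 : Tendsto (fun k => ‖u k‖) atTop (𝓝 1))
    (hAu : Tendsto (fun k => ‖A k (u k)‖) atTop (𝓝 M))
    (hweak : WeakTendsto (fun k => A k (u k)) 0) :
    LimEssNear domn Tn M⁻¹ lam := by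
  have hc' : Tendsto (fun k => (‖A k (u k)‖ : ℂ)⁻¹) atTop (𝓝 (M : ℂ)⁻¹) :=
    ((Complex.continuous_ofReal.tendsto _).comp hAu).inv₀ (by exact_mod_cast hM.ne')
  refine limEssNear_of_eventually hφ (x := fun k => (‖A k (u k)‖ : ℂ)⁻¹ • A k (u k)) ?_
    (hweak.smul hc') ?_
  · filter_upwards [hA, hAu.eventually_const_lt hM] with k hk hpos
    exact ⟨(domn (φ k)).smul_mem _ (hk.1 _ (hu k)).1, norm_smul_inv_norm (norm_pos_iff.mp hpos)⟩
  · refine (mul_one M⁻¹ ▸ (hAu.inv₀ hM.ne').mul hu1).congr' ?_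
    filter_upwards [hA] with k hk
    rw [map_smul, smul_comm lam, ← smul_sub, (hk.1 _ (hu k)).2, norm_smul]
    simp

theorem limEssNear_of_norm_lt_limsup [CompleteSpace E] [TopologicalSpace.SeparableSpace E]
    {R : E →L[ℂ] E} (hPn : ∀ n, IsOrthProj (Hn n) (Pn n))
    (hRn : ∀ᶠ n in atTop, InResolvent (Hn n) (domn n) (Tn n) lam (Rn n) ∧ ‖Rn n‖ ≤ C)
    (hR : ∀ y, Tendsto (fun n => Rn n y) atTop (𝓝 (R y)))
    (hR' : ∀ z, Tendsto (fun n => ((Rn n)†) z) atTop (𝓝 ((R†) z)))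
    (hlt : ‖R‖ < limsup (fun n => ‖Rn n‖) atTop) :
    LimEssNear domn Tn (limsup (fun n => ‖Rn n‖) atTop)⁻¹ lam := by
  set M := limsup (fun n => ‖Rn n‖) atTop
  have hM : 0 < M := (norm_nonneg _).trans_lt hlt
  obtain ⟨φ, hφM, hφ⟩ := exists_seq_tendsto_limsup (f := atTop) (u := fun n => ‖Rn n‖)
    (isBoundedUnder_of_eventually_ge (.of_forall fun _ => norm_nonneg _)).isCoboundedUnder_le
    (isBoundedUnder_of_eventually_le (hRn.mono fun _ h => h.2))
  have hRφ := hφ.eventually (hRn.mono fun _ h => h.1)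
  obtain ⟨u, hu, hu1, hRu⟩ :=
    exists_mem_tendsto_norm_apply hφM (fun k => hPn (φ k)) (hRφ.mono fun _ h => h.2.2)
  obtain ⟨ψ, v, hψ, hv⟩ := exists_strictMono_weakTendsto hu1
  have hφψ := hφ.comp hψ.tendsto_atTop
  have hv0 : v = 0 := hv.eq_zero_of_tendsto_norm_apply (fun y => (hR y).comp hφψ)
    (fun z => (hR' z).comp hφψ) hlt (hφM.comp hψ.tendsto_atTop) (fun k => hu1 (ψ k))
    (hRu.comp hψ.tendsto_atTop)
  have hweak := hv.apply (fun k => hu1 (ψ k)) (fun z => (hR' z).comp hφψ)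
  rw [hv0, map_zero] at hweak
  exact limEssNear_of_resolvent_apply hφψ (hψ.tendsto_atTop.eventually hRφ) (fun k => hu (ψ k)) hM
    (tendsto_norm_one_of_tendsto_norm_apply hM (hφM.comp hψ.tendsto_atTop) (fun k => hu1 (ψ k))
      (hRu.comp hψ.tendsto_atTop)) (hRu.comp hψ.tendsto_atTop) hweak

end ResolventSequences

end

open ContinuousLinearMap in
theorem stmt14_general [TopologicalSpace.SeparableSpace H₀]
    (Hsp dom : Submodule ℂ H₀) (T : H₀ →ₗ[ℂ] H₀)
    (hT : ActsIn Hsp dom T)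
    (Hn domn : ℕ → Submodule ℂ H₀) (Tn : ℕ → H₀ →ₗ[ℂ] H₀)
    (hTn : ∀ n, ActsIn (Hn n) (domn n) (Tn n))
    (P : H₀ →L[ℂ] H₀) (Pn : ℕ → H₀ →L[ℂ] H₀)
    (hP : IsOrthProj Hsp P) (hPn : ∀ n, IsOrthProj (Hn n) (Pn n))
    (hPconv : ∀ y : H₀, Tendsto (fun n => Pn n y) atTop (nhds (P y)))
    (domS : Submodule ℂ H₀) (S : H₀ →ₗ[ℂ] H₀)
    (domSn : ℕ → Submodule ℂ H₀) (Sn : ℕ → H₀ →ₗ[ℂ] H₀)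
    (hadjT : IsAdjointOp Hsp dom T domS S)
    (hadjn : ∀ n, IsAdjointOp (Hn n) (domn n) (Tn n) (domSn n) (Sn n))
    (hconv : GSRConv Hsp dom T Hn domn Tn)
    (hconvadj : GSRConv Hsp domS S Hn domSn Sn)
    (lam : ℂ) (Rlam : H₀ →L[ℂ] H₀)
    (hrho : InResolvent Hsp dom T lam Rlam)
    (n₀ : ℕ) (C : ℝ) (Rn : ℕ → H₀ →L[ℂ] H₀)
    (hDelta : ∀ n, n ≥ n₀ → InResolvent (Hn n) (domn n) (Tn n) lam (Rn n) ∧ ‖Rn n‖ ≤ C)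
    (lamn : ℕ → ℂ) (hlamn : Tendsto lamn atTop (nhds lam)) :
    ∃ (n₁ : ℕ) (R' : ℕ → H₀ →L[ℂ] H₀),
      (∀ n, n ≥ n₁ → InResolvent (Hn n) (domn n) (Tn n) (lamn n) (R' n)) ∧
      Filter.limsup (fun n => ‖R' n‖) atTop = Filter.limsup (fun n => ‖Rn n‖) atTop ∧
      ‖Rlam‖ ≤ Filter.limsup (fun n => ‖Rn n‖) atTop ∧
      (‖Rlam‖ < Filter.limsup (fun n => ‖Rn n‖) atTop →
        LimEssNear domn Tn (Filter.limsup (fun n => ‖Rn n‖) atTop)⁻¹ lam ∧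
        LimEssNear domSn Sn (Filter.limsup (fun n => ‖Rn n‖) atTop)⁻¹
          ((starRingEnd ℂ) lam)) := by
  have hRn : ∀ᶠ n in atTop, InResolvent (Hn n) (domn n) (Tn n) lam (Rn n) ∧ ‖Rn n‖ ≤ C :=
    eventually_atTop.2 ⟨n₀, hDelta⟩
  have hRn_adj : ∀ᶠ n in atTop,
      InResolvent (Hn n) (domSn n) (Sn n) (starRingEnd ℂ lam) ((Rn n)†) ∧ ‖(Rn n)†‖ ≤ C := by
    filter_upwards [hRn, hconvadj.eventually_map_mem hPn fun n => (hadjn n).1] with n hn hSn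
    exact ⟨hn.1.adjoint (hPn n) (hTn n).1 (hadjn n) hSn,
      (LinearIsometryEquiv.norm_map _ _).trans_le hn.2⟩
  have hR_adj : InResolvent Hsp domS S (starRingEnd ℂ lam) (Rlam†) :=
    hrho.adjoint hP hT.1 hadjT fun _ => hconvadj.map_mem hP hadjT.1
  have hstrong := hconv.tendsto_resolvent_apply hP hPn hPconv hrho hRn
  have hstrong_adj := hconvadj.tendsto_resolvent_apply hP hPn hPconv hR_adj hRn_adj
  obtain ⟨R', hR', hlimsup⟩ := exists_resolvent_limsup_norm_eq hPn (fun n => (hTn n).1) hRn hlamn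
  obtain ⟨n₁, hn₁⟩ := eventually_atTop.1 hR'
  refine ⟨n₁, R', hn₁, hlimsup, norm_le_limsup_norm_of_tendsto_apply hstrong
    (isBoundedUnder_of_eventually_le (hRn.mono fun _ h => h.2)), fun hlt => ⟨?_, ?_⟩⟩
  · exact limEssNear_of_norm_lt_limsup hPn hRn hstrong hstrong_adj hlt
  · simpa only [LinearIsometryEquiv.norm_map] using
      limEssNear_of_norm_lt_limsup hPn hRn_adj hstrong_adj
        (by simpa only [adjoint_adjoint] using hstrong)
        (by simpa only [LinearIsometryEquiv.norm_map] using hlt)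

theorem stmt14 [TopologicalSpace.SeparableSpace H₀]
    (Hsp dom : Submodule ℂ H₀) (T : H₀ →ₗ[ℂ] H₀)
    (hHcl : IsClosed ((Hsp : Set H₀)))
    (hT : ActsIn Hsp dom T) (hTcl : IsClosedOp dom T)
    (Hn domn : ℕ → Submodule ℂ H₀) (Tn : ℕ → H₀ →ₗ[ℂ] H₀)
    (hHncl : ∀ n, IsClosed ((Hn n : Set H₀)))
    (hTn : ∀ n, ActsIn (Hn n) (domn n) (Tn n))
    (hTncl : ∀ n, IsClosedOp (domn n) (Tn n))
    (P : H₀ →L[ℂ] H₀) (Pn : ℕ → H₀ →L[ℂ] H₀)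
    (hP : IsOrthProj Hsp P) (hPn : ∀ n, IsOrthProj (Hn n) (Pn n))
    (hPconv : ∀ y : H₀, Tendsto (fun n => Pn n y) atTop (nhds (P y)))
    (domS : Submodule ℂ H₀) (S : H₀ →ₗ[ℂ] H₀)
    (domSn : ℕ → Submodule ℂ H₀) (Sn : ℕ → H₀ →ₗ[ℂ] H₀)
    (hadjT : IsAdjointOp Hsp dom T domS S)
    (hadjn : ∀ n, IsAdjointOp (Hn n) (domn n) (Tn n) (domSn n) (Sn n))
    (hconv : GSRConv Hsp dom T Hn domn Tn)
    (hconvadj : GSRConv Hsp domS S Hn domSn Sn)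
    (lam : ℂ) (Rlam : H₀ →L[ℂ] H₀)
    (hrho : InResolvent Hsp dom T lam Rlam)
    (n₀ : ℕ) (C : ℝ) (Rn : ℕ → H₀ →L[ℂ] H₀)
    (hDelta : ∀ n, n ≥ n₀ → InResolvent (Hn n) (domn n) (Tn n) lam (Rn n) ∧ ‖Rn n‖ ≤ C)
    (lamn : ℕ → ℂ) (hlamn : Tendsto lamn atTop (nhds lam)) :
    ∃ (n₁ : ℕ) (R' : ℕ → H₀ →L[ℂ] H₀),
      (∀ n, n ≥ n₁ → InResolvent (Hn n) (domn n) (Tn n) (lamn n) (R' n)) ∧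
      Filter.limsup (fun n => ‖R' n‖) atTop = Filter.limsup (fun n => ‖Rn n‖) atTop ∧
      ‖Rlam‖ ≤ Filter.limsup (fun n => ‖Rn n‖) atTop ∧
      (‖Rlam‖ < Filter.limsup (fun n => ‖Rn n‖) atTop →
        LimEssNear domn Tn (Filter.limsup (fun n => ‖Rn n‖) atTop)⁻¹ lam ∧
        LimEssNear domSn Sn (Filter.limsup (fun n => ‖Rn n‖) atTop)⁻¹
          ((starRingEnd ℂ) lam)) :=
  stmt14_general Hsp dom T hT Hn domn Tn hTn P Pn hP hPn hPconv domS S domSn Sn hadjT hadjn hconv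
    hconvadj lam Rlam hrho n₀ C Rn hDelta lamn hlamn
end
end

section
/- If T_n converges to T in generalised strong resolvent sense, then the essential ε-near spectrum of T is contained in the limiting essential ε-near spectrum of (T_n). -/
open Filter Topology

noncomputable section

variable {H₀ : Type} [NormedAddCommGroup H₀] [InnerProductSpace ℂ H₀] [CompleteSpace H₀]

/-!
Let `x_k` be a singular sequence witnessing `λ ∈ Λ_{ess,ε}(T)` and let `λ₀` be the common
resolvent point. For fixed `k`, `u_n := R_n (T - λ₀) x_k` lies in `dom(T_n)`, tends to
`R (T - λ₀) x_k = x_k`, and `T_n u_n = P_n (T - λ₀) x_k + λ₀ u_n` tends to `T x_k`. A diagonal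
choice `n = φ k` gives vectors that are asymptotically close to `x_k` in the graph norm; after
normalisation they are still weakly null, and `‖(T_{φ k} - λ) ·‖` still tends to `ε`.
-/

theorem tendsto_norm_of_tendsto_sub {ι E : Type*} [SeminormedAddCommGroup E] {l : Filter ι}
    {a b : ι → E} {c : ℝ} (hab : Tendsto (fun i => a i - b i) l (𝓝 0))
    (hb : Tendsto (fun i => ‖b i‖) l (𝓝 c)) : Tendsto (fun i => ‖a i‖) l (𝓝 c) := by
  have hdiff : Tendsto (fun i => ‖a i‖ - ‖b i‖) l (𝓝 0) :=
    squeeze_zero_norm (fun i => abs_norm_sub_norm_le (a i) (b i)) (by simpa using hab.norm)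
  simpa using hdiff.add hb

theorem exists_strictMono_tendsto_diag {E : Type*} [SeminormedAddCommGroup E]
    {f : ℕ → ℕ → E} {g : ℕ → E} {p : ℕ → ℕ → Prop}
    (hf : ∀ k, Tendsto (f k) atTop (𝓝 (g k))) (hp : ∀ k, ∀ᶠ n in atTop, p k n) :
    ∃ φ : ℕ → ℕ, StrictMono φ ∧ (∀ k, p k (φ k)) ∧
      Tendsto (fun k => f k (φ k) - g k) atTop (𝓝 0) := by
  have hclose : ∀ k, ∀ᶠ n in atTop, p k n ∧ ‖f k n - g k‖ < 1 / ((k : ℝ) + 1) := fun k =>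
    (hp k).and ((tendsto_iff_norm_sub_tendsto_zero.mp (hf k)).eventually_lt_const
      (by positivity))
  obtain ⟨φ, hφ, hφk⟩ := extraction_forall_of_eventually hclose
  exact ⟨φ, hφ, fun k => (hφk k).1,
    squeeze_zero_norm (fun k => (hφk k).2.le) tendsto_one_div_add_atTop_nhds_zero_nat⟩

section Hilbert

variable {E : Type} [NormedAddCommGroup E] [InnerProductSpace ℂ E]

theorem WeakTendsto.of_tendsto_sub {x w : ℕ → E} {x₀ : E} (hx : WeakTendsto x x₀)
    (hwx : Tendsto (fun k => w k - x k) atTop (𝓝 0)) : WeakTendsto w x₀ := by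
  intro y
  have hsmall := hwx.inner (𝕜 := ℂ) (tendsto_const_nhds (x := y))
  rw [inner_zero_left] at hsmall
  have hlim := (hx y).add hsmall
  rw [add_zero] at hlim
  exact hlim.congr fun k => by rw [← inner_add_left, sub_add_sub_cancel']

theorem WeakTendsto.smul_s17 {x : ℕ → E} {c : ℕ → ℂ} {a : ℂ} (hx : WeakTendsto x 0)
    (hc : Tendsto c atTop (𝓝 a)) : WeakTendsto (fun k => c k • x k) 0 := by
  intro y
  have hconj : Tendsto (fun k => (starRingEnd ℂ) (c k)) atTop (𝓝 ((starRingEnd ℂ) a)) :=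
    (Complex.continuous_conj.tendsto a).comp hc
  have hlim := hconj.mul (by simpa using hx y)
  rw [mul_zero] at hlim
  exact hlim.congr fun k => by rw [sub_zero, inner_smul_left]

theorem IsOrthProj.apply_eq_self_s17 {Hsp : Submodule ℂ E} {P : E →L[ℂ] E}
    (hP : IsOrthProj Hsp P) {u : E} (hu : u ∈ Hsp) : P u = u := by
  have h : u - P u = 0 :=
    Submodule.disjoint_def.mp Hsp.orthogonal_disjoint _ (Hsp.sub_mem hu (hP u).1) (hP u).2
  exact (sub_eq_zero.mp h).symm

theorem InResolvent.apply_mem_and_eq {Hsp dom : Submodule ℂ E} {T : E →ₗ[ℂ] E} {lam : ℂ}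
    {R P : E →L[ℂ] E} (hR : InResolvent Hsp dom T lam R) (hP : IsOrthProj Hsp P) (y : E) :
    R y ∈ dom ∧ T (R y) = P y + lam • R y := by
  have hRP : R y = R (P y) := by
    rw [← sub_eq_zero, ← map_sub]
    exact hR.2.2 _ (hP y).2
  obtain ⟨hmem, heq⟩ := hR.1 (P y) (hP y).1
  rw [hRP]
  exact ⟨hmem, eq_add_of_sub_eq heq⟩

theorem GSRConv.exists_tendsto_graph {Hsp dom : Submodule ℂ E} {T : E →ₗ[ℂ] E}
    {Hn domn : ℕ → Submodule ℂ E} {Tn : ℕ → E →ₗ[ℂ] E} {P : E →L[ℂ] E}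
    {Pn : ℕ → E →L[ℂ] E} (hconv : GSRConv Hsp dom T Hn domn Tn) (hdom : dom ≤ Hsp)
    (hTH : ∀ x ∈ dom, T x ∈ Hsp) (hP : IsOrthProj Hsp P) (hPn : ∀ n, IsOrthProj (Hn n) (Pn n))
    (hPconv : ∀ y : E, Tendsto (fun n => Pn n y) atTop (𝓝 (P y))) {x : E} (hx : x ∈ dom) :
    ∃ u : ℕ → E, (∀ᶠ n in atTop, u n ∈ domn n) ∧ Tendsto u atTop (𝓝 x) ∧
      Tendsto (fun n => Tn n (u n)) atTop (𝓝 (T x)) := by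
  obtain ⟨n₀, lam₀, R, Rn, hR, hRn, hRconv⟩ := hconv
  set y := T x - lam₀ • x
  have hy : y ∈ Hsp := Hsp.sub_mem (hTH x hx) (Hsp.smul_mem _ (hdom hx))
  have hu : Tendsto (fun n => Rn n y) atTop (𝓝 x) := hR.2.1 x hx ▸ hRconv y
  have hPy : Tendsto (fun n => Pn n y) atTop (𝓝 y) := by
    simpa only [hP.apply_eq_self_s17 hy] using hPconv y
  refine ⟨fun n => Rn n y, ?_, hu, ?_⟩
  · filter_upwards [eventually_ge_atTop n₀] with n hn
    exact ((hRn n hn).apply_mem_and_eq (hPn n) y).1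
  · have hlim := hPy.add (hu.const_smul lam₀)
    rw [sub_add_cancel] at hlim
    refine hlim.congr' ?_
    filter_upwards [eventually_ge_atTop n₀] with n hn
    exact ((hRn n hn).apply_mem_and_eq (hPn n) y).2.symm

theorem limEssNear_of_normalize {domn : ℕ → Submodule ℂ E} {Tn : ℕ → E →ₗ[ℂ] E}
    {eps : ℝ} {lam : ℂ} {φ : ℕ → ℕ} {w : ℕ → E} (hφ : StrictMono φ)
    (hw : ∀ k, w k ∈ domn (φ k)) (hw0 : ∀ k, w k ≠ 0)
    (hw1 : Tendsto (fun k => ‖w k‖) atTop (𝓝 1)) (hww : WeakTendsto w 0)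
    (hTw : Tendsto (fun k => ‖Tn (φ k) (w k) - lam • w k‖) atTop (𝓝 eps)) :
    LimEssNear domn Tn eps lam := by
  set c : ℕ → ℂ := fun k => ((‖w k‖⁻¹ : ℝ) : ℂ)
  have hc : Tendsto c atTop (𝓝 ((1⁻¹ : ℝ) : ℂ)) :=
    (Complex.continuous_ofReal.tendsto _).comp (hw1.inv₀ one_ne_zero)
  have hnorm_c : ∀ k, ‖c k‖ = ‖w k‖⁻¹ := fun k => by simp [c]
  refine ⟨φ, fun k => c k • w k, hφ, fun k => (domn (φ k)).smul_mem _ (hw k), fun k => ?_,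
    hww.smul_s17 hc, ?_⟩
  · rw [norm_smul, hnorm_c, inv_mul_cancel₀ (norm_ne_zero_iff.mpr (hw0 k))]
  · have hscale : ∀ k, ‖Tn (φ k) (c k • w k) - lam • c k • w k‖ =
        ‖w k‖⁻¹ * ‖Tn (φ k) (w k) - lam • w k‖ := fun k => by
      rw [map_smul, smul_comm lam, ← smul_sub, norm_smul, hnorm_c]
    have hlim := (hw1.inv₀ one_ne_zero).mul hTw
    rw [inv_one, one_mul] at hlim
    exact hlim.congr fun k => (hscale k).symm

end Hilbert

theorem stmt17_general
    (Hsp dom : Submodule ℂ H₀) (T : H₀ →ₗ[ℂ] H₀)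
    (hT : ActsIn Hsp dom T)
    (Hn domn : ℕ → Submodule ℂ H₀) (Tn : ℕ → H₀ →ₗ[ℂ] H₀)
    (P : H₀ →L[ℂ] H₀) (Pn : ℕ → H₀ →L[ℂ] H₀)
    (hP : IsOrthProj Hsp P) (hPn : ∀ n, IsOrthProj (Hn n) (Pn n))
    (hPconv : ∀ y : H₀, Tendsto (fun n => Pn n y) atTop (nhds (P y)))
    (hconv : GSRConv Hsp dom T Hn domn Tn)
    (eps : ℝ) (lam : ℂ)
    (hlam : EssNear dom T eps lam) :
    LimEssNear domn Tn eps lam := by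
  obtain ⟨x, hxdom, hx1, hxw, hxT⟩ := hlam
  choose u hu_mem hu_lim hTu_lim using fun k =>
    hconv.exists_tendsto_graph hT.1 hT.2.2 hP hPn hPconv (hxdom k)
  have hx0 : ∀ k, x k ≠ 0 := fun k => norm_ne_zero_iff.mp (by rw [hx1 k]; exact one_ne_zero)
  obtain ⟨φ, hφ, hp, hlim⟩ := exists_strictMono_tendsto_diag
    (f := fun k n => (u k n, Tn n (u k n))) (g := fun k => (x k, T (x k)))
    (p := fun k n => u k n ∈ domn n ∧ u k n ≠ 0)
    (fun k => (hu_lim k).prodMk_nhds (hTu_lim k))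
    (fun k => (hu_mem k).and ((hu_lim k).eventually_ne (hx0 k)))
  set w := fun k => u k (φ k)
  have hwx : Tendsto (fun k => w k - x k) atTop (𝓝 0) := hlim.fst_nhds
  have hTwx : Tendsto (fun k => Tn (φ k) (w k) - T (x k)) atTop (𝓝 0) := hlim.snd_nhds
  have hTw : Tendsto (fun k => (Tn (φ k) (w k) - lam • w k) - (T (x k) - lam • x k)) atTop
      (𝓝 0) := by
    have hlim := hTwx.sub (hwx.const_smul lam)
    rw [smul_zero, sub_zero] at hlim
    refine hlim.congr fun k => ?_
    simp only [smul_sub]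
    abel
  exact limEssNear_of_normalize hφ (fun k => (hp k).1) (fun k => (hp k).2)
    (tendsto_norm_of_tendsto_sub hwx (by simp [hx1])) (hxw.of_tendsto_sub hwx)
    (tendsto_norm_of_tendsto_sub hTw hxT)

theorem stmt17 [TopologicalSpace.SeparableSpace H₀]
    (Hsp dom : Submodule ℂ H₀) (T : H₀ →ₗ[ℂ] H₀)
    (hHcl : IsClosed ((Hsp : Set H₀)))
    (hT : ActsIn Hsp dom T) (hTcl : IsClosedOp dom T)
    (Hn domn : ℕ → Submodule ℂ H₀) (Tn : ℕ → H₀ →ₗ[ℂ] H₀)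
    (hHncl : ∀ n, IsClosed ((Hn n : Set H₀)))
    (hTn : ∀ n, ActsIn (Hn n) (domn n) (Tn n))
    (hTncl : ∀ n, IsClosedOp (domn n) (Tn n))
    (P : H₀ →L[ℂ] H₀) (Pn : ℕ → H₀ →L[ℂ] H₀)
    (hP : IsOrthProj Hsp P) (hPn : ∀ n, IsOrthProj (Hn n) (Pn n))
    (hPconv : ∀ y : H₀, Tendsto (fun n => Pn n y) atTop (nhds (P y)))
    (hconv : GSRConv Hsp dom T Hn domn Tn)
    (eps : ℝ) (heps : 0 < eps) (lam : ℂ)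
    (hlam : EssNear dom T eps lam) :
    LimEssNear domn Tn eps lam :=
  stmt17_general Hsp dom T hT Hn domn Tn P Pn hP hPn hPconv hconv eps lam hlam

end
end
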